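/- Let π ∈ 𝒫* and suppose that for some (x,a) ∈ K the inequality P_x^π[A_0 = a] > 0 holds. Define the shifted policy δ by δ_t(·|h_t) := π_{t+1}(·| x, a, h_t) for t ∈ ℕ and h_t an admissible history. Then for every y ∈ S with p_{xy}(a) > 0: (i) P_y^δ[A_t ∈ B*(X_t)] = 1 for every t ∈ ℕ; and (ii) there exists a policy δ̃ ∈ 𝒫* with P_y^δ = P_y^{δ̃}. -/

import Mathlib

open scoped Classical BigOperators ENNReal

namespace RiskSensitive

/-- A (history-dependent, randomized) policy for a finite MDP: given the past
(chronological list of (state, action) pairs) and the current state, it assigns a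
probability weight to each action, concentrated on the admissible actions. -/
structure Policy (S A : Type*) [Fintype S] [Fintype A] (Adm : S → Finset A) where
  toFun : List (S × A) → S → A → ℝ
  nonneg : ∀ h s a, 0 ≤ toFun h s a
  sum_one : ∀ h s, ∑ a, toFun h s a = 1
  supp : ∀ h s a, a ∉ Adm s → toFun h s a = 0

variable {S A : Type*} [Fintype S] [Fintype A]
variable (Adm : S → Finset A) (p : S → A → S → ℝ) (C : S → A → ℝ) (lam : ℝ)

/-- Probability of a finite trajectory (list of (action, next-state) pairs), given the
history so far and the current state. -/
noncomputable def pathProbAux (π : Policy S A Adm) :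
    List (S × A) → S → List (A × S) → ℝ
  | _, _, [] => 1
  | hist, x, (a, y) :: rest =>
      π.toFun hist x a * p x a y * pathProbAux π (hist ++ [(x, a)]) y rest

/-- `pathProb π x l` is `P_x^π[A_0 = a_0, X_1 = y_1, …]` for `l = [(a_0,y_1),…]`. -/
noncomputable def pathProb (π : Policy S A Adm) (x : S) (l : List (A × S)) : ℝ :=
  pathProbAux Adm p π [] x l

/-- Probability of a cylinder event depending on the first `n` (action, next-state) pairs. -/
noncomputable def cylProb (π : Policy S A Adm) (x : S) (n : ℕ)
    (E : (Fin n → A × S) → Prop) : ℝ :=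
  ∑ v : Fin n → A × S, if E v then pathProb Adm p π x (List.ofFn v) else 0

/-- The state `X_t` along the trajectory encoded by `l`, starting from `x`. -/
def stateAt (x : S) (l : List (A × S)) (t : ℕ) : S :=
  (l.take t).foldl (fun _ q => q.2) x

/-- The final state of the finite trajectory `l` started at `x`. -/
def lastState (x : S) (l : List (A × S)) : S :=
  l.foldl (fun _ q => q.2) x

/-- `Σ_t w(X_t, A_t)` along the finite trajectory `l` started at `x`. -/
def costSum (w : S → A → ℝ) : S → List (A × S) → ℝ
  | _, [] => 0
  | x, (a, y) :: rest => w x a + costSum w y rest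

/-- `J_n(λ,π,x) = (1/λ) log E_x^π[exp(λ Σ_{t<n} C(X_t,A_t))]`. -/
noncomputable def Jn (π : Policy S A Adm) (x : S) (n : ℕ) : ℝ :=
  (1 / lam) * Real.log (∑ v : Fin n → A × S,
    pathProb Adm p π x (List.ofFn v) * Real.exp (lam * costSum C x (List.ofFn v)))

/-- The risk-sensitive average cost `J(λ,π,x) = limsup_n J_n(λ,π,x)/n`. -/
noncomputable def Javg (π : Policy S A Adm) (x : S) : ℝ :=
  Filter.limsup (fun n : ℕ => Jn Adm p C lam π x n / n) Filter.atTop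

/-- Optimal risk-sensitive average cost `J*(λ,x)`. -/
noncomputable def Jopt (x : S) : ℝ :=
  ⨅ π : Policy S A Adm, Javg Adm p C lam π x

/-- `π` is `ε`-optimal at `x`. -/
def EpsOptimalAt (π : Policy S A Adm) (x : S) (ε : ℝ) : Prop :=
  Javg Adm p C lam π x ≤ Jopt Adm p C lam x + ε

/-- `FirstExit Q v` : the trajectory `v` leaves `{Q}` for the first time exactly at its
last step, i.e. the exit time of `Q` equals `n`. -/
def FirstExit (Q : S → Prop) {n : ℕ} (v : Fin n → A × S) : Prop :=
  0 < n ∧ (∀ t : Fin n, (t : ℕ) + 1 < n → Q (v t).2) ∧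
    ∀ t : Fin n, (t : ℕ) + 1 = n → ¬ Q (v t).2

/-- `E_x^π[ exp(Σ_{t<τ} w(X_t,A_t)) ]` where `τ = min{n ≥ 1 : ¬ Q (X_n)}` is the first
exit time from `Q` (the contribution of `[τ = ∞]` is null when `τ < ∞` a.s.). -/
noncomputable def EexitExp (π : Policy S A Adm) (x : S) (Q : S → Prop)
    (w : S → A → ℝ) : ℝ≥0∞ :=
  ∑' n : ℕ, ∑ v : Fin n → A × S,
    if FirstExit Q v then
      ENNReal.ofReal (pathProb Adm p π x (List.ofFn v) *
        Real.exp (costSum w x (List.ofFn v)))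
    else 0

/-- `E_x^π[ exp(Σ_{t<T} w(X_t,A_t)) ]` with `T` the first positive arrival time to `z`. -/
noncomputable def EhitExp (π : Policy S A Adm) (x z : S) (w : S → A → ℝ) : ℝ≥0∞ :=
  EexitExp Adm p π x (fun y => y ≠ z) w

/-- `E_x^π[T]`, the expected first positive arrival time to `z`, computed as
`Σ_{n≥0} P_x^π[T > n]`. -/
noncomputable def ExpT (π : Policy S A Adm) (x z : S) : ℝ≥0∞ :=
  ∑' n : ℕ, ENNReal.ofReal
    (cylProb Adm p π x n (fun v => ∀ t : Fin n, (v t).2 ≠ z))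

/-- `P_x^π[T > n]`, the probability that `z` is not visited during the first `n` steps. -/
noncomputable def survProb (π : Policy S A Adm) (x z : S) (n : ℕ) : ℝ :=
  cylProb Adm p π x n (fun v => ∀ t : Fin n, (v t).2 ≠ z)

/-- The stationary policy induced by a choice function `f ∈ 𝔽`. -/
noncomputable def stationary (f : S → A) (hf : ∀ s, f s ∈ Adm s) : Policy S A Adm where
  toFun := fun _ s a => if a = f s then 1 else 0
  nonneg := by intro h s a; (try dsimp only); split <;> norm_num
  sum_one := by intro h s; simp
  supp := by
    intro h s a ha
    try dsimp only
    rw [if_neg]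
    intro hEq
    exact ha (hEq ▸ hf s)

/-- The simultaneous Doeblin condition: `E_x^f[T] ≤ M` for every state `x` and every
stationary policy `f`, where `T` is the first positive arrival time to `z`. -/
def Doeblin (z : S) (M : ℝ) : Prop :=
  0 < M ∧ ∀ (x : S) (f : S → A) (hf : ∀ s, f s ∈ Adm s),
    ExpT Adm p (stationary Adm f hf) x z ≤ ENNReal.ofReal M

/-- `B_g(x) = {a ∈ A(x) : g(x) = max{g(y) : p_{xy}(a) > 0}}`. -/
def Bg (g : S → ℝ) (x : S) : Set A :=
  {a | a ∈ Adm x ∧ g x = sSup (g '' {y | 0 < p x a y})}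

/-- The family `𝒢` of functions characterizing `J*(λ,·)`. -/
def Gclass : Set (S → ℝ) :=
  {g | (∀ x, g x = sInf ((fun a => sSup (g '' {y | 0 < p x a y})) '' (Adm x : Set A))) ∧
    ∃ h : S → ℝ, ∀ x,
      sInf ((fun a => Real.exp (lam * C x a) * ∑ y, p x a y * Real.exp (lam * h y)) ''
        Bg Adm p g x) ≤ Real.exp (lam * g x + lam * h x)}

/-- The class `𝒫*` of policies which always select actions in `B*(X_t)`. -/
def Pstar : Set (Policy S A Adm) :=
  {π | ∀ (x : S) (t : ℕ),
    cylProb Adm p π x (t + 1)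
      (fun v => (v (Fin.last t)).1 ∈
        Bg Adm p (Jopt Adm p C lam) (stateAt x (List.ofFn v) t)) = 1}

/-- The deviation function
`h(x) = inf_{π ∈ 𝒫*} (1/λ) log E_x^π[exp(λα Σ_{t<T}(C(X_t,A_t) − J*(λ,X_t)))]`. -/
noncomputable def hdev (z : S) (α : ℝ) (x : S) : EReal :=
  ⨅ π ∈ Pstar Adm p C lam, ((lam⁻¹ : ℝ) : EReal) *
    ENNReal.log (EhitExp Adm p π x z
      (fun s a => lam * α * (C s a - Jopt Adm p C lam s)))

/-- `ψ(ε) = (1/λ) inf_{δ∈𝒫*} log E_z^δ[exp(λ Σ_{t<T}(C(X_t,A_t) − γ₀ − 2ε))]`. -/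
noncomputable def psi (z : S) (ε : ℝ) : EReal :=
  ((lam⁻¹ : ℝ) : EReal) * ⨅ π ∈ Pstar Adm p C lam,
    ENNReal.log (EhitExp Adm p π z z
      (fun s a => lam * (C s a - Jopt Adm p C lam z - 2 * ε)))

/-- `ξ₀ = −(1−α) log β / (λα)`. -/
noncomputable def xi0 (α β : ℝ) : ℝ := -((1 - α) * Real.log β) / (lam * α)

/-- `ξ₁`: 1 if `J*(λ,·)` is constant, otherwise the minimum gap between distinct
values of `J*(λ,·)`. -/
noncomputable def xi1 : ℝ :=
  if ∀ u v : S, Jopt Adm p C lam u = Jopt Adm p C lam v then 1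
  else sInf {d | ∃ u v : S, Jopt Adm p C lam u < Jopt Adm p C lam v ∧
    d = Jopt Adm p C lam v - Jopt Adm p C lam u}

/-- `ξ = min{ξ₀, ξ₁}`. -/
noncomputable def xi (α β : ℝ) : ℝ := min (xi0 lam α β) (xi1 Adm p C lam)

/-- The shifted policy obtained by prefixing the fixed history `pre`. -/
def shiftPolicy (π : Policy S A Adm) (pre : List (S × A)) : Policy S A Adm where
  toFun := fun h s a => π.toFun (pre ++ h) s a
  nonneg := fun h s a => π.nonneg _ s a
  sum_one := fun h s => π.sum_one _ s
  supp := fun h s a ha => π.supp _ s a ha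

/-- The history (list of (state, action) pairs) along the trajectory `l` started at `x`. -/
def histOf : S → List (A × S) → List (S × A)
  | _, [] => []
  | x, (a, y) :: rest => (x, a) :: histOf y rest

/-!
Because `π` plays `a` at `x` with positive probability and `p_{xy}(a) > 0`, a finite trajectory
from `y` has positive `δ`-probability only if its extension by `(x, a)` has positive
`π`-probability from `x`; as `π ∈ 𝒫*`, every such trajectory selects its actions in `B*`.
The policy `π` itself shows that `B*(s) ≠ ∅` for every state `s`. Replacing `δ` by a fixed
selector of `B*` at the histories where it is not concentrated on `B*(X_t)` yields a policy of
`𝒫*`, and those histories are `δ`-null from `y`, so the law of the trajectory from `y` is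
unchanged.
-/

def IsStochastic : Prop :=
  ∀ x, ∀ a ∈ Adm x, (∀ y, 0 ≤ p x a y) ∧ ∑ y, p x a y = 1

def SelectsIn (π : Policy S A Adm) (x : S) (G : S → Set A) : Prop :=
  ∀ (l : List (A × S)) (c : A) (z : S),
    c ∉ G (lastState x l) → pathProb Adm p π x (l ++ [(c, z)]) = 0

variable {Adm p}

section PathProb

variable (π : Policy S A Adm)

theorem toFun_mul_transition_nonneg (hp : IsStochastic Adm p) (h : List (S × A)) (x : S) (a : A) (z : S) :
    0 ≤ π.toFun h x a * p x a z := by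
  by_cases ha : a ∈ Adm x
  · exact mul_nonneg (π.nonneg h x a) ((hp x a ha).1 z)
  · rw [π.supp h x a ha, zero_mul]

theorem sum_toFun_mul_transition (hp : IsStochastic Adm p) (h : List (S × A)) (x : S) :
    ∑ q : A × S, π.toFun h x q.1 * p x q.1 q.2 = 1 := by
  rw [Fintype.sum_prod_type, ← π.sum_one h x]
  refine Fintype.sum_congr _ _ fun a => ?_
  dsimp only
  rw [← Finset.mul_sum]
  by_cases ha : a ∈ Adm x
  · rw [(hp x a ha).2, mul_one]
  · rw [π.supp h x a ha, zero_mul]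

theorem pathProbAux_nonneg (hp : IsStochastic Adm p) :
    ∀ (h : List (S × A)) (x : S) (l : List (A × S)), 0 ≤ pathProbAux Adm p π h x l
  | _, _, [] => zero_le_one
  | h, x, (a, z) :: l =>
    mul_nonneg (toFun_mul_transition_nonneg π hp h x a z) (pathProbAux_nonneg hp _ z l)

theorem sum_pathProbAux_ofFn (hp : IsStochastic Adm p) :
    ∀ (n : ℕ) (h : List (S × A)) (x : S),
      ∑ v : Fin n → A × S, pathProbAux Adm p π h x (List.ofFn v) = 1
  | 0, _, _ => by simp [pathProbAux]
  | n + 1, h, x => by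
    rw [← (Fin.consEquiv fun _ => A × S).sum_comp, Fintype.sum_prod_type, ← sum_toFun_mul_transition π hp h x]
    refine Fintype.sum_congr _ _ fun ⟨c, z⟩ => ?_
    simp only [Fin.consEquiv_apply, List.ofFn_succ, Fin.cons_zero, Fin.cons_succ, pathProbAux,
      ← Finset.mul_sum, sum_pathProbAux_ofFn hp n, mul_one]

theorem pathProbAux_append :
    ∀ (h : List (S × A)) (x : S) (l l' : List (A × S)),
      pathProbAux Adm p π h x (l ++ l') =
        pathProbAux Adm p π h x l * pathProbAux Adm p π (h ++ histOf x l) (lastState x l) l'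
  | h, x, [], l' => by simp [pathProbAux, histOf, lastState]
  | h, x, (a, z) :: l, l' => by
    simp only [List.cons_append, pathProbAux, histOf, pathProbAux_append _ z l l',
      List.append_assoc, List.nil_append, mul_assoc]
    rfl

theorem pathProb_append_singleton (x : S) (l : List (A × S)) (c : A) (z : S) :
    pathProb Adm p π x (l ++ [(c, z)]) =
      pathProb Adm p π x l * (π.toFun (histOf x l) (lastState x l) c * p (lastState x l) c z) := by
  simp [pathProb, pathProbAux_append, pathProbAux]

theorem pathProbAux_shiftPolicy (pre : List (S × A)) :
    ∀ (h : List (S × A)) (x : S) (l : List (A × S)),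
      pathProbAux Adm p (shiftPolicy Adm π pre) h x l = pathProbAux Adm p π (pre ++ h) x l
  | _, _, [] => rfl
  | h, x, (a, z) :: l => by
    simp only [pathProbAux, pathProbAux_shiftPolicy pre _ z l, List.append_assoc]
    rfl

theorem pathProb_cons (x : S) (a : A) (y : S) (l : List (A × S)) :
    pathProb Adm p π x ((a, y) :: l) =
      π.toFun [] x a * p x a y * pathProb Adm p (shiftPolicy Adm π [(x, a)]) y l := by
  rw [pathProb, pathProb, pathProbAux_shiftPolicy, List.append_nil]
  rfl

theorem pathProb_congr_of_reachable {π' : Policy S A Adm} {x : S}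
    (h : ∀ l, pathProb Adm p π x l ≠ 0 →
      π'.toFun (histOf x l) (lastState x l) = π.toFun (histOf x l) (lastState x l))
    (l : List (A × S)) : pathProb Adm p π' x l = pathProb Adm p π x l := by
  induction l using List.reverseRecOn with
  | nil => rfl
  | append_singleton l q ih =>
    obtain ⟨c, z⟩ := q
    rw [pathProb_append_singleton, pathProb_append_singleton, ih]
    by_cases hl : pathProb Adm p π x l = 0
    · rw [hl, zero_mul, zero_mul]
    · rw [h l hl]

end PathProb

section CylProb

variable {π : Policy S A Adm} {x : S}

theorem exists_of_cylProb_ne_zero {n : ℕ} {E : (Fin n → A × S) → Prop}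
    (h : cylProb Adm p π x n E ≠ 0) : ∃ v, E v := by
  obtain ⟨v, -, hv⟩ := Finset.exists_ne_zero_of_sum_ne_zero h
  exact ⟨v, by_contra fun hE => hv (if_neg hE)⟩

theorem cylProb_eq_one_iff (hp : IsStochastic Adm p) {n : ℕ} (E : (Fin n → A × S) → Prop) :
    cylProb Adm p π x n E = 1 ↔ ∀ v, ¬ E v → pathProb Adm p π x (List.ofFn v) = 0 := by
  set R := ∑ v : Fin n → A × S, if E v then 0 else pathProb Adm p π x (List.ofFn v)
  have hsplit : cylProb Adm p π x n E + R = 1 := by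
    rw [cylProb, ← Finset.sum_add_distrib, ← sum_pathProbAux_ofFn π hp n [] x]
    exact Fintype.sum_congr _ _ fun v => by split_ifs <;> simp [pathProb]
  have hR : ∀ v ∈ Finset.univ, 0 ≤ if E v then 0 else pathProb Adm p π x (List.ofFn v) :=
    fun v _ => by split_ifs; exacts [le_rfl, pathProbAux_nonneg π hp _ _ _]
  calc cylProb Adm p π x n E = 1 ↔ R = 0 := by constructor <;> intro <;> linarith
    _ ↔ _ := by simp [R, Finset.sum_eq_zero_iff_of_nonneg hR]

theorem toFun_ne_zero_of_cylProb_pos {a : A}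
    (h : 0 < cylProb Adm p π x 1 (fun v => (v 0).1 = a)) : π.toFun [] x a ≠ 0 := by
  intro ha
  refine h.ne' (Finset.sum_eq_zero fun v _ => ?_)
  split_ifs with hv
  · have hofFn : List.ofFn v = [((v 0).1, (v 0).2)] := by rw [List.ofFn_succ, List.ofFn_zero]
    rw [hofFn, pathProb_cons, hv, ha, zero_mul, zero_mul]
  · rfl

theorem forall_cylProb_eq_one_iff_selectsIn (hp : IsStochastic Adm p) (G : S → Set A) :
    (∀ t : ℕ, cylProb Adm p π x (t + 1)
      (fun v => (v (Fin.last t)).1 ∈ G (stateAt x (List.ofFn v) t)) = 1) ↔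
      SelectsIn Adm p π x G := by
  have hstate : ∀ {l : List (A × S)} (l' : List (A × S)) {t : ℕ}, l.length = t →
      stateAt x (l ++ l') t = lastState x l := by
    rintro l l' t rfl
    simp [stateAt, lastState]
  simp only [cylProb_eq_one_iff hp]
  constructor
  · intro h l c z hc
    have hv : List.ofFn (Fin.snoc (fun i : Fin l.length => l[i]) (c, z) :
        Fin (l.length + 1) → A × S) = l ++ [(c, z)] := by
      rw [List.ofFn_succ_last]
      simp
    rw [← hv]
    apply h
    rwa [hv, Fin.snoc_last, hstate _ rfl]
  · intro h t v hv
    rw [List.ofFn_succ_last] at hv ⊢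
    rw [hstate _ List.length_ofFn] at hv
    exact h _ _ _ hv

end CylProb

section SelectsIn

variable {π : Policy S A Adm} {G : S → Set A}

theorem SelectsIn.shift {x y : S} {a : A} (hπ : SelectsIn Adm p π x G)
    (hpos : π.toFun [] x a * p x a y ≠ 0) :
    SelectsIn Adm p (shiftPolicy Adm π [(x, a)]) y G := fun l c z hc =>
  (mul_eq_zero.1 ((pathProb_cons π x a y _).symm.trans (hπ ((a, y) :: l) c z hc))).resolve_left
    hpos

theorem SelectsIn.toFun_eq_zero (hp : IsStochastic Adm p) {x : S} (hπ : SelectsIn Adm p π x G)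
    {l : List (A × S)} (hl : pathProb Adm p π x l ≠ 0) {c : A} (hc : c ∉ G (lastState x l)) :
    π.toFun (histOf x l) (lastState x l) c = 0 := by
  by_contra hne
  have hadm : c ∈ Adm (lastState x l) := by_contra fun h => hne (π.supp _ _ _ h)
  obtain ⟨z, -, hz⟩ : ∃ z ∈ Finset.univ, p (lastState x l) c z ≠ 0 :=
    Finset.exists_ne_zero_of_sum_ne_zero ((hp _ c hadm).2 ▸ one_ne_zero)
  have hnull := hπ l c z hc
  rw [pathProb_append_singleton] at hnull
  exact mul_ne_zero hl (mul_ne_zero hne hz) hnull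

theorem selectsIn_of_toFun_eq_zero (h : ∀ hist s c, c ∉ G s → π.toFun hist s c = 0) (x : S) :
    SelectsIn Adm p π x G := fun l c z hc => by
  rw [pathProb_append_singleton, h _ _ c hc, zero_mul, mul_zero]

end SelectsIn

noncomputable def patchPolicy (G : S → Set A) (b : S → A) (hb : ∀ s, b s ∈ Adm s)
    (δ : Policy S A Adm) : Policy S A Adm where
  toFun h s :=
    if ∀ c ∉ G s, δ.toFun h s c = 0 then δ.toFun h s else (stationary Adm b hb).toFun h s
  nonneg h s c := by split_ifs <;> apply Policy.nonneg
  sum_one h s := by split_ifs <;> apply Policy.sum_one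
  supp h s c hc := by split_ifs <;> exact Policy.supp _ _ _ _ hc

section PatchPolicy

variable {G : S → Set A} {b : S → A} (hb : ∀ s, b s ∈ Adm s) {δ : Policy S A Adm}

theorem selectsIn_patchPolicy (hbG : ∀ s, b s ∈ G s) (x : S) :
    SelectsIn Adm p (patchPolicy G b hb δ) x G := by
  refine selectsIn_of_toFun_eq_zero (fun h s c hc => ?_) x
  dsimp only [patchPolicy]
  split_ifs with hδ
  · exact hδ c hc
  · exact if_neg (ne_of_mem_of_not_mem (hbG s) hc).symm

theorem pathProb_patchPolicy (hp : IsStochastic Adm p) {x : S} (hδ : SelectsIn Adm p δ x G)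
    (l : List (A × S)) : pathProb Adm p (patchPolicy G b hb δ) x l = pathProb Adm p δ x l :=
  pathProb_congr_of_reachable δ (fun _ hl => if_pos fun _ hc => hδ.toFun_eq_zero hp hl hc) l

end PatchPolicy

section Pstar

variable {C lam}

theorem exists_mem_Bg_Jopt {π : Policy S A Adm}
    (hπ : π ∈ Pstar Adm p C lam) (s : S) : ∃ c, c ∈ Bg Adm p (Jopt Adm p C lam) s :=
  let ⟨_, hv⟩ := exists_of_cylProb_ne_zero ((hπ s 0).symm ▸ one_ne_zero)
  ⟨_, hv⟩

theorem mem_Pstar_iff (hp : IsStochastic Adm p) (π : Policy S A Adm) :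
    π ∈ Pstar Adm p C lam ↔ ∀ x, SelectsIn Adm p π x (Bg Adm p (Jopt Adm p C lam)) :=
  forall_congr' fun _ => forall_cylProb_eq_one_iff_selectsIn hp _

end Pstar

theorem shifted_policy_in_Pstar
    (hp : ∀ (x : S), ∀ a ∈ Adm x, (∀ y, 0 ≤ p x a y) ∧ (∑ y, p x a y) = 1)
    (π : Policy S A Adm) (hπ : π ∈ Pstar Adm p C lam)
    (x : S) (a : A)
    (h0 : 0 < cylProb Adm p π x 1 (fun v => (v 0).1 = a))
    (y : S) (hy : 0 < p x a y) :
    (∀ t : ℕ, cylProb Adm p (shiftPolicy Adm π [(x, a)]) y (t + 1)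
      (fun v => (v (Fin.last t)).1 ∈
        Bg Adm p (Jopt Adm p C lam) (stateAt y (List.ofFn v) t)) = 1) ∧
    ∃ δ' ∈ Pstar Adm p C lam, ∀ l : List (A × S),
      pathProb Adm p (shiftPolicy Adm π [(x, a)]) y l = pathProb Adm p δ' y l := by
  have hδ : SelectsIn Adm p (shiftPolicy Adm π [(x, a)]) y (Bg Adm p (Jopt Adm p C lam)) :=
    ((mem_Pstar_iff hp π).1 hπ x).shift (mul_ne_zero (toFun_ne_zero_of_cylProb_pos h0) hy.ne')
  refine ⟨(forall_cylProb_eq_one_iff_selectsIn hp _).2 hδ, ?_⟩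
  choose b hb using exists_mem_Bg_Jopt hπ
  have hbA : ∀ s, b s ∈ Adm s := fun s => (hb s).1
  exact ⟨patchPolicy _ b hbA _, (mem_Pstar_iff hp _).2 (selectsIn_patchPolicy hbA hb),
    fun l => (pathProb_patchPolicy hbA hp hδ l).symm⟩

end RiskSensitive
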